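/- (Cauchy determinant identity underlying the Szegő kernel of the symmetrized polydisc) Let n ≥ 1 and let z, w ∈ ℂⁿ satisfy zᵢ·conj(wⱼ) ≠ 1 for all 1 ≤ i, j ≤ n. Then det[ (1 − zᵢ·conj(wⱼ))⁻¹ ]_{i,j=1}^n · ∏_{i,j=1}^n (1 − zᵢ·conj(wⱼ)) = ∏_{1≤i<j≤n} (zᵢ − zⱼ)(conj(wᵢ) − conj(wⱼ)). Consequently, for z, w in the polydisc 𝔻ⁿ, the Szegő kernel of the symmetrized polydisc 𝔾ₙ = s(𝔻ⁿ) satisfies S_{𝔾ₙ}(s(z), s(w)) = ∏_{i,j=1}^n (1 − zᵢ·conj(wⱼ))⁻¹. -/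

import Mathlib

/-!
Since `∏ₖ (1 - aᵢ bₖ) · (1 - aᵢ bⱼ)⁻¹ = ∏_{k ≠ j} (1 - aᵢ bₖ)`, it suffices to compute the
determinant of this numerator matrix. Its entries are polynomials of degree `< n` in `aᵢ`, so it
factors as `vandermonde a * E`, where column `j` of `E` holds the coefficients of
`∏_{k ≠ j} (1 - bₖ X)`. Multiplying `E` instead by the projective Vandermonde matrix with rows
`(b_l ^ (n-1), …, 1)` evaluates the homogenised polynomials at `(1, b_l)`, which gives a diagonal
matrix; comparing determinants yields `det E = ∏_{i<j} (bⱼ - bᵢ)` when `b` is injective, while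
otherwise `E` has two equal columns. The Szegő kernel identity is the Leibniz expansion of the
same determinant.
-/

open Polynomial Finset

theorem Finset.prod_erase_eq_prod_erase_of_eq {ι M : Type*} [DecidableEq ι] [CommMonoid M]
    {s : Finset ι} {f : ι → M} {k l : ι} (hk : k ∈ s) (hl : l ∈ s) (hkl : f k = f l) :
    ∏ x ∈ s.erase k, f x = ∏ x ∈ s.erase l, f x := by
  rcases eq_or_ne k l with rfl | hne
  · rfl
  rw [← mul_prod_erase _ f (mem_erase.2 ⟨hne.symm, hl⟩),
    ← mul_prod_erase _ f (mem_erase.2 ⟨hne, hk⟩), erase_right_comm, hkl]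

namespace Polynomial
variable {R : Type*} [CommRing R]

theorem eval_homogenize_eq_sum_antidiagonal (p : R[X]) (d : ℕ) (x : Fin 2 → R) :
    MvPolynomial.eval x (p.homogenize d) =
      ∑ kl ∈ antidiagonal d, p.coeff kl.1 * x 0 ^ kl.1 * x 1 ^ kl.2 := by
  simp [homogenize, MvPolynomial.eval_monomial, mul_assoc]

theorem homogenize_prod_one_sub_C_mul_X {ι : Type*} (s : Finset ι) (b : ι → R) :
    (∏ k ∈ s, (1 - C (b k) * X)).homogenize #s =
      ∏ k ∈ s, (MvPolynomial.X 1 - MvPolynomial.C (b k) * MvPolynomial.X 0) := by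
  have hdeg (k : ι) : (1 - C (b k) * X).natDegree ≤ 1 := by compute_degree
  simpa using homogenize_finsetProd (s := s) (n := fun _ ↦ 1) fun k _ ↦ hdeg k

end Polynomial

namespace Matrix
variable {R : Type*} [CommRing R] {n : ℕ}

theorem projVandermonde_mul_of_coeff (v w : Fin n → R) (p : Fin n → R[X]) :
    projVandermonde v w * of (fun m j : Fin n ↦ (p j).coeff m) =
      of fun i j ↦ MvPolynomial.eval ![v i, w i] ((p j).homogenize (n - 1)) := by
  ext i j
  obtain ⟨n, rfl⟩ : ∃ m, n = m + 1 := Nat.exists_eq_add_one_of_ne_zero i.pos.ne'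
  rw [mul_apply, of_apply, eval_homogenize_eq_sum_antidiagonal,
    Nat.sum_antidiagonal_eq_sum_range_succ_mk, Nat.add_sub_cancel, ← Fin.sum_univ_eq_sum_range]
  refine sum_congr rfl fun m _ ↦ ?_
  simp only [projVandermonde_apply, Fin.val_rev, Nat.reduceSubDiff, of_apply, cons_val_zero,
    cons_val_one]
  ring

noncomputable def coeffProdErase (b : Fin n → R) : Matrix (Fin n) (Fin n) R :=
  of fun m j ↦ (∏ k ∈ univ.erase j, (1 - C (b k) * X)).coeff m

theorem projVandermonde_mul_coeffProdErase (v w b : Fin n → R) :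
    projVandermonde v w * coeffProdErase b =
      of fun i j ↦ ∏ k ∈ univ.erase j, (w i - b k * v i) := by
  ext i j
  have hcard : #(univ.erase j) = n - 1 := by simp
  rw [coeffProdErase, projVandermonde_mul_of_coeff, of_apply, of_apply, ← hcard,
    homogenize_prod_one_sub_C_mul_X, map_prod]
  simp

theorem det_coeffProdErase [IsDomain R] (b : Fin n → R) :
    (coeffProdErase b).det = ∏ i, ∏ j ∈ Ioi i, (b j - b i) := by
  by_cases hb : Function.Injective b
  · have hdiag : projVandermonde 1 b * coeffProdErase b =
        diagonal fun j ↦ ∏ k ∈ univ.erase j, (b j - b k) := by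
      rw [projVandermonde_mul_coeffProdErase]
      ext l j
      rcases eq_or_ne l j with rfl | hlj
      · simp
      · simpa [hlj] using prod_eq_zero (mem_erase.2 ⟨hlj, mem_univ l⟩) (sub_self (b l))
    have hW : (projVandermonde 1 b).det ≠ 0 := by
      simpa [det_projVandermonde, prod_eq_zero_iff, sub_eq_zero] using
        fun i j hij h ↦ hij.ne (hb h)
    apply mul_left_cancel₀ hW
    rw [← det_mul, hdiag, det_diagonal, det_projVandermonde, ← prod_mul_distrib]
    simpa [compl_singleton, ← prod_mul_distrib] using
      (prod_prod_Ioi_mul_eq_prod_prod_off_diag fun x y ↦ b y - b x).symm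
  · obtain ⟨k, l, hkl, hne⟩ := Function.not_injective_iff.1 hb
    have hcol : ∀ m, coeffProdErase b m k = coeffProdErase b m l := fun m ↦ by
      rw [coeffProdErase, of_apply, of_apply,
        prod_erase_eq_prod_erase_of_eq (mem_univ k) (mem_univ l) (by rw [hkl])]
    rw [det_zero_of_column_eq hne hcol, ← det_vandermonde,
      det_vandermonde_eq_zero_iff.2 ⟨k, l, hkl, hne⟩]

theorem det_prod_erase_one_sub_mul [IsDomain R] (a b : Fin n → R) :
    (of fun i j ↦ ∏ k ∈ univ.erase j, (1 - a i * b k)).det =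
      ∏ i, ∏ j ∈ Ioi i, (a i - a j) * (b i - b j) := by
  have hfactor : of (fun i j ↦ ∏ k ∈ univ.erase j, (1 - a i * b k)) =
      vandermonde a * coeffProdErase b := by
    rw [vandermonde_eq_projVandermonde, projVandermonde_mul_coeffProdErase]
    simp only [Pi.one_apply, mul_comm (a _)]
  rw [hfactor, det_mul, det_vandermonde, det_coeffProdErase, ← prod_mul_distrib]
  refine prod_congr rfl fun i _ ↦ ?_
  rw [← prod_mul_distrib]
  exact prod_congr rfl fun j _ ↦ by ring

theorem det_of_inv_one_sub_mul_mul_prod {K : Type*} [Field K] (a b : Fin n → K)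
    (hab : ∀ i j, a i * b j ≠ 1) :
    (of fun i j ↦ (1 - a i * b j)⁻¹).det * ∏ i, ∏ j, (1 - a i * b j) =
      ∏ i, ∏ j ∈ Ioi i, (a i - a j) * (b i - b j) := by
  rw [mul_comm, ← det_mul_column, ← det_prod_erase_one_sub_mul]
  congr 1
  ext i j
  rw [of_apply, of_apply, of_apply, ← mul_prod_erase univ _ (mem_univ j), mul_comm (1 - _),
    mul_inv_cancel_right₀ (sub_ne_zero.2 (hab i j).symm)]

end Matrix

open scoped ComplexConjugate

theorem cauchy_determinant_szego_general {n : ℕ} (z w : Fin n → ℂ)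
    (hzw : ∀ i j, z i * conj (w j) ≠ 1) :
    (Matrix.det (Matrix.of fun i j : Fin n => (1 - z i * conj (w j))⁻¹)
        * ∏ i, ∏ j, (1 - z i * conj (w j))
      = ∏ i, ∏ j ∈ Finset.Ioi i, (z i - z j) * (conj (w i) - conj (w j))) ∧
    ((∀ i, ‖z i‖ < 1) → (∀ i, ‖w i‖ < 1) →
      (∑ σ : Equiv.Perm (Fin n),
          ((Equiv.Perm.sign σ : ℤ) : ℂ) * ∏ j, (1 - z j * conj (w (σ j)))⁻¹)
        = (∏ i, ∏ j ∈ Finset.Ioi i, (z i - z j) * (conj (w i) - conj (w j)))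
            * ∏ i, ∏ j, (1 - z i * conj (w j))⁻¹) := by
  have hcauchy := Matrix.det_of_inv_one_sub_mul_mul_prod z (fun j ↦ conj (w j)) hzw
  refine ⟨hcauchy, fun _ _ ↦ ?_⟩
  have hsum : ∑ σ : Equiv.Perm (Fin n),
        ((Equiv.Perm.sign σ : ℤ) : ℂ) * ∏ j, (1 - z j * conj (w (σ j)))⁻¹ =
      (Matrix.of fun i j ↦ (1 - z i * conj (w j))⁻¹).det := by
    rw [← Matrix.det_transpose, Matrix.det_apply']
    rfl
  have hprod : ∏ i, ∏ j, (1 - z i * conj (w j)) ≠ 0 :=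
    prod_ne_zero_iff.2 fun i _ ↦ prod_ne_zero_iff.2 fun j _ ↦ sub_ne_zero.2 (hzw i j).symm
  rw [hsum, ← hcauchy]
  simp only [prod_inv_distrib]
  rw [mul_inv_cancel_right₀ hprod]

/-- **The Cauchy determinant identity underlying the Szegő kernel of the symmetrized
polydisc `𝔾ₙ`.**  Let `z, w ∈ ℂⁿ` with `zᵢ · conj(wⱼ) ≠ 1` for all `i, j`.  Then
`det[(1 - zᵢ conj(wⱼ))⁻¹] · ∏_{i,j} (1 - zᵢ conj(wⱼ)) = ∏_{i<j} (zᵢ - zⱼ)(conj(wᵢ) - conj(wⱼ))`.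
Consequently, for `z, w` in the polydisc `𝔻ⁿ`, the Szegő kernel of the symmetrized polydisc,
defined via the sign representation of `𝔖ₙ` by
`S_{𝔾ₙ}(s(z),s(w)) = (∏_{i<j}(zᵢ-zⱼ)(conj wᵢ - conj wⱼ))⁻¹ Σ_σ sgn(σ) ∏_j (1 - z_j conj(w_{σ j}))⁻¹`,
satisfies `S_{𝔾ₙ}(s(z), s(w)) = ∏_{i,j} (1 - zᵢ conj(wⱼ))⁻¹`; the second conclusion below is
this identity in cross-multiplied form:
`Σ_σ sgn(σ) ∏_j (1 - z_j conj(w_{σ j}))⁻¹ = ∏_{i<j}(zᵢ-zⱼ)(conj wᵢ - conj wⱼ) · ∏_{i,j}(1 - zᵢ conj wⱼ)⁻¹`. -/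
theorem cauchy_determinant_szego {n : ℕ} (hn : 1 ≤ n) (z w : Fin n → ℂ)
    (hzw : ∀ i j, z i * conj (w j) ≠ 1) :
    (Matrix.det (Matrix.of fun i j : Fin n => (1 - z i * conj (w j))⁻¹)
        * ∏ i, ∏ j, (1 - z i * conj (w j))
      = ∏ i, ∏ j ∈ Finset.Ioi i, (z i - z j) * (conj (w i) - conj (w j))) ∧
    ((∀ i, ‖z i‖ < 1) → (∀ i, ‖w i‖ < 1) →
      (∑ σ : Equiv.Perm (Fin n),
          ((Equiv.Perm.sign σ : ℤ) : ℂ) * ∏ j, (1 - z j * conj (w (σ j)))⁻¹)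
        = (∏ i, ∏ j ∈ Finset.Ioi i, (z i - z j) * (conj (w i) - conj (w j)))
            * ∏ i, ∏ j, (1 - z i * conj (w j))⁻¹) :=
  cauchy_determinant_szego_general z w hzw
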